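/- arXiv:2108.01181 — 2 statements merged into one kernel-verified Lean document; each statement's English description precedes it below -/
import Mathlib

section
/- For a finite nonempty alphabet S of size m, there exists a constant C such that for every n ≥ 1 and every string x₁…x_n over S, the redundancy of the sequential KT probability assignment relative to the best constant probability assignment satisfies log₂( ∏_{a∈S} (N_a/n)^{N_a} / P_KT(x₁…x_n) ) ≤ (m/2)·log₂ n + C, where N_a is the number of occurrences of symbol a in x₁…x_n (with the convention 0⁰ = 1). -/
/-!
Work in natural logarithms with `R(l) = ∑ₐ Nₐ log Nₐ - n log n - log P_KT(l)`.
Appending a symbol of current count `N` to a string of length `n` changes `R` by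
`[(N+1) log (N+1) - N log N - log (N + 1/2)] - [(n+1) log (n+1) - n log n - log (n + m/2)]`.
The first bracket is at most `1`: the slope of `u log u` over `[N, N+1]` is the mean of its
derivative `1 + log u`, which is concave, so it is at most the value at the midpoint. By concavity
of `log`, the second bracket is at least `1 - (m/2) (log (n+1) - log n)`. Hence
`R(l) - (m/2) log n` does not increase, and it equals `log m` on strings of length one.
-/

/-- The sequential Krichevsky–Trofimov probability assignment.  A string
`x₁ … x_n` is represented as a list with the most recent symbol at the head,
so `ktSeq (a :: xs)` extends the prefix `xs` by the new symbol `a`. -/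
noncomputable def ktSeq {S : Type*} [Fintype S] [DecidableEq S] : List S → ℝ
  | [] => 1
  | a :: xs =>
      ktSeq xs * (((xs.count a : ℝ) + 1 / 2) /
        ((xs.length : ℝ) + (Fintype.card S : ℝ) / 2))

open Real

theorem mul_log_sub_mul_log_le {c y : ℝ} (hy : 0 ≤ y) (hyc : y ≤ c) :
    (c + y) * log (c + y) - (c - y) * log (c - y) ≤ 2 * y * (1 + log c) := by
  set F : ℝ → ℝ := fun y => (c + y) * log (c + y) - (c - y) * log (c - y) - 2 * y * (1 + log c)
  have hF_cont : Continuous F := by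
    have hmul_log := continuous_mul_log
    fun_prop
  have hF_deriv : ∀ y ∈ interior (Set.Icc 0 c),
      HasDerivWithinAt F (log (c ^ 2 - y ^ 2) - log (c ^ 2)) (interior (Set.Icc 0 c)) y := by
    intro y hy
    rw [interior_Icc] at hy
    obtain ⟨hy0, hyc⟩ := hy
    have hplus := (hasDerivAt_mul_log (by linarith : c + y ≠ 0)).comp y
      ((hasDerivAt_id y).const_add c)
    have hminus := (hasDerivAt_mul_log (by linarith : c - y ≠ 0)).comp y
      ((hasDerivAt_id y).const_sub c)
    have hlin := ((hasDerivAt_id y).const_mul 2).mul_const (1 + log c)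
    have hderiv : (log (c + y) + 1) * 1 - (log (c - y) + 1) * -1 - 2 * 1 * (1 + log c)
        = log (c ^ 2 - y ^ 2) - log (c ^ 2) := by
      rw [show c ^ 2 - y ^ 2 = (c + y) * (c - y) by ring,
        log_mul (by linarith) (by linarith), log_pow]
      push_cast
      ring
    exact (show HasDerivAt F _ y from
      ((hplus.sub hminus).sub hlin).congr_deriv hderiv).hasDerivWithinAt
  have hF_anti : AntitoneOn F (Set.Icc 0 c) := by
    refine antitoneOn_of_hasDerivWithinAt_nonpos (convex_Icc 0 c) hF_cont.continuousOn
      hF_deriv fun y hy => ?_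
    rw [interior_Icc] at hy
    exact sub_nonpos.mpr (log_le_log (by nlinarith [hy.1, hy.2]) (by nlinarith))
  have h := hF_anti ⟨le_rfl, hy.trans hyc⟩ ⟨hy, hyc⟩ hy
  simpa [F] using h

theorem add_one_mul_log_add_one_sub_mul_log_le {x : ℝ} (hx : 0 ≤ x) :
    (x + 1) * log (x + 1) - x * log x ≤ 1 + log (x + 1 / 2) := by
  have h := mul_log_sub_mul_log_le (c := x + 1 / 2) (y := 1 / 2) (by norm_num) (by linarith)
  rw [show x + 1 / 2 + 1 / 2 = x + 1 by ring, show x + 1 / 2 - 1 / 2 = x by ring] at h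
  linarith

theorem one_add_log_le_log_add_one_add_mul {x u : ℝ} (hx : 0 < x) (hu : 0 < u) :
    1 + log u ≤ log (x + 1) + u * (log (x + 1) - log x) := by
  have htangent := log_le_sub_one_of_pos (div_pos hu (by linarith : 0 < x + 1))
  have hslope := one_sub_inv_le_log_of_pos (div_pos (by linarith : 0 < x + 1) hx)
  rw [log_div hu.ne' (by linarith)] at htangent
  rw [log_div (by linarith) hx.ne', inv_div,
    show 1 - x / (x + 1) = 1 / (x + 1) by field_simp; ring] at hslope
  have := mul_le_mul_of_nonneg_left hslope hu.le
  rw [mul_one_div] at this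
  linarith

section

variable {S : Type*} [Fintype S] [DecidableEq S]

theorem sum_count_cons {M : Type*} [AddCommGroup M] (f : ℕ → M) (a : S) (l : List S) :
    ∑ b, f ((a :: l).count b) = ∑ b, f (l.count b) + (f (l.count a + 1) - f (l.count a)) := by
  rw [← sub_eq_iff_eq_add', ← Finset.sum_sub_distrib,
    Finset.sum_eq_single a (fun b _ hb => by rw [List.count_cons_of_ne (Ne.symm hb), sub_self])
      (by simp), List.count_cons_self]

theorem sum_count_eq_length (l : List S) : ∑ b, (l.count b : ℝ) = l.length := by
  induction l with
  | nil => simp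
  | cons a l ih =>
    rw [sum_count_cons (fun k => (k : ℝ)), ih, List.length_cons]
    push_cast
    ring

theorem ktSeq_pos (l : List S) : 0 < ktSeq l := by
  induction l with
  | nil => simp [ktSeq]
  | cons a l ih =>
    have hcard : (0 : ℝ) < Fintype.card S := by exact_mod_cast Fintype.card_pos_iff.mpr ⟨a⟩
    rw [ktSeq]
    exact mul_pos ih (div_pos (by positivity) (by positivity))

theorem log_ktSeq_cons (a : S) (l : List S) :
    log (ktSeq (a :: l)) =
      log (ktSeq l) + log (l.count a + 1 / 2) - log (l.length + Fintype.card S / 2) := by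
  have hcard : (0 : ℝ) < Fintype.card S := by exact_mod_cast Fintype.card_pos_iff.mpr ⟨a⟩
  rw [ktSeq, log_mul (ktSeq_pos l).ne' (by positivity), log_div (by positivity) (by positivity)]
  ring

/-- The redundancy in nats, with `∑ₐ Nₐ log (Nₐ / n)` expanded using `∑ₐ Nₐ = n`. -/
noncomputable def ktRedundancy (l : List S) : ℝ :=
  ∑ a, (l.count a : ℝ) * log (l.count a) - l.length * log l.length - log (ktSeq l)

theorem ktRedundancy_cons (a : S) (l : List S) :
    ktRedundancy (a :: l) = ktRedundancy l
      + ((l.count a + 1) * log (l.count a + 1) - l.count a * log (l.count a)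
        - log (l.count a + 1 / 2))
      - ((l.length + 1) * log (l.length + 1) - l.length * log l.length
        - log (l.length + Fintype.card S / 2)) := by
  rw [ktRedundancy, ktRedundancy, sum_count_cons (fun k => (k : ℝ) * log k), log_ktSeq_cons,
    List.length_cons]
  push_cast
  ring

theorem ktRedundancy_singleton (a : S) : ktRedundancy [a] = log (Fintype.card S) := by
  have hcard : (0 : ℝ) < Fintype.card S := by exact_mod_cast Fintype.card_pos_iff.mpr ⟨a⟩
  rw [ktRedundancy_cons]
  simp [ktRedundancy, ktSeq, log_div, hcard.ne']

theorem ktRedundancy_cons_sub_le (a : S) {l : List S} (hl : l ≠ []) :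
    ktRedundancy (a :: l) - Fintype.card S / 2 * log (a :: l).length
      ≤ ktRedundancy l - Fintype.card S / 2 * log l.length := by
  have hn : (0 : ℝ) < l.length := by exact_mod_cast List.length_pos_iff.mpr hl
  have hcount := add_one_mul_log_add_one_sub_mul_log_le (Nat.cast_nonneg (l.count a))
  have hlength := one_add_log_le_log_add_one_add_mul hn
    (by positivity : (0 : ℝ) < l.length + Fintype.card S / 2)
  rw [ktRedundancy_cons, List.length_cons]
  push_cast
  linear_combination hcount + hlength

theorem ktRedundancy_le :
    ∀ l : List S, l ≠ [] →
      ktRedundancy l ≤ Fintype.card S / 2 * log l.length + log (Fintype.card S)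
  | [a], _ => by simp [ktRedundancy_singleton]
  | a :: b :: l, _ => by
    have ih := ktRedundancy_le (b :: l) (List.cons_ne_nil b l)
    have hstep := ktRedundancy_cons_sub_le a (List.cons_ne_nil b l)
    linarith

theorem log_div_ktSeq (l : List S) :
    log ((∏ a, ((l.count a : ℝ) / l.length) ^ l.count a) / ktSeq l) = ktRedundancy l := by
  have hterm : ∀ a, (l.count a : ℝ) * log (l.count a / l.length)
      = l.count a * log (l.count a) - l.count a * log l.length := by
    intro a
    rcases (l.count a).eq_zero_or_pos with h | h
    · simp [h]
    · have hlen : 0 < l.length := h.trans_le (List.count_le_length)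
      rw [log_div (by positivity) (by positivity)]
      ring
  have hfactor : ∀ a ∈ Finset.univ, ((l.count a : ℝ) / l.length) ^ l.count a ≠ 0 := by
    intro a _
    rcases (l.count a).eq_zero_or_pos with h | h
    · simp [h]
    · have hlen : 0 < l.length := h.trans_le (List.count_le_length)
      positivity
  rw [log_div (Finset.prod_ne_zero_iff.mpr hfactor) (ktSeq_pos l).ne', log_prod hfactor]
  simp only [log_pow, hterm, Finset.sum_sub_distrib, ← Finset.sum_mul, sum_count_eq_length]
  rfl

end

theorem ktSeq_redundancy_bound_general
    {S : Type*} [Fintype S] [DecidableEq S] :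
    ∃ C : ℝ, ∀ l : List S, 1 ≤ l.length →
      Real.logb 2
          ((∏ a : S, ((l.count a : ℝ) / (l.length : ℝ)) ^ l.count a) /
            ktSeq l)
        ≤ ((Fintype.card S : ℝ) / 2) * Real.logb 2 (l.length : ℝ) + C := by
  refine ⟨logb 2 (Fintype.card S), fun l hl => ?_⟩
  calc logb 2 ((∏ a, ((l.count a : ℝ) / l.length) ^ l.count a) / ktSeq l)
      = ktRedundancy l / log 2 := by rw [logb, log_div_ktSeq]
    _ ≤ (Fintype.card S / 2 * log l.length + log (Fintype.card S)) / log 2 := by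
      gcongr
      exact ktRedundancy_le l (List.ne_nil_of_length_pos hl)
    _ = Fintype.card S / 2 * logb 2 l.length + logb 2 (Fintype.card S) := by
      simp only [logb]
      ring

/-- over a finite nonempty alphabet of size `m`, there is a
constant `C` such that for every nonempty string the redundancy of the
sequential KT assignment relative to the best constant probability assignment
(the empirical distribution, with likelihood `∏_a (N_a/n)^{N_a}`, convention
`0 ^ 0 = 1`) is at most `(m/2) · log₂ n + C`. -/
theorem ktSeq_redundancy_bound
    {S : Type*} [Fintype S] [DecidableEq S] [Nonempty S] :
    ∃ C : ℝ, ∀ l : List S, 1 ≤ l.length →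
      Real.logb 2
          ((∏ a : S, ((l.count a : ℝ) / (l.length : ℝ)) ^ l.count a) /
            ktSeq l)
        ≤ ((Fintype.card S : ℝ) / 2) * Real.logb 2 (l.length : ℝ) + C :=
  ktSeq_redundancy_bound_general
end

section
/- Let P be a row-stochastic matrix indexed by a finite nonempty set (all entries nonnegative, each row summing to 1). Then the Cesàro averages (1/K) Σ_{k=1}^{K} P^k converge entrywise to a limit matrix as K → ∞. -/
/-!
On `S → ℝ` with the sup norm a row-stochastic matrix acts as a contraction `f`. In finite
dimension the fixed vectors of a contraction and the range of `f - 1` are complementary: if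
`y = f z - z` is fixed then `f^[n] z = z + n • y`, and this orbit is bounded only when `y = 0`.
The Birkhoff averages are constant on fixed vectors and telescope to `(f^[N] z - z) / N → 0` on
`f z - z`, so they converge (von Neumann's argument). Column `j` of the Cesàro average of the
`P ^ k`, `1 ≤ k ≤ K`, is the Birkhoff average of the column `P *ᵥ Pi.single j 1`.
-/

open Filter

namespace LinearMap

variable {𝕜 E : Type*} [RCLike 𝕜] [NormedAddCommGroup E] [NormedSpace 𝕜 E] {f : E →ₗ[𝕜] E}

lemma iterate_eq_add_smul_of_isFixedPt_sub {z : E} (hfix : Function.IsFixedPt f (f z - z))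
    (n : ℕ) :
    f^[n] z = z + (n : 𝕜) • (f z - z) := by
  induction n with
  | zero => simp
  | succ n ih =>
    rw [Function.iterate_succ_apply', ih, map_add, map_smul, hfix]
    push_cast
    module

lemma norm_iterate_le (hf : LipschitzWith 1 f) (n : ℕ) (x : E) : ‖f^[n] x‖ ≤ ‖x‖ := by
  simpa [iterate_map_zero] using (hf.iterate n).dist_le_mul x 0

theorem disjoint_eqLocus_range_sub_one (hf : LipschitzWith 1 f) :
    Disjoint (eqLocus f 1) (range (f - 1)) := by
  rw [Submodule.disjoint_def]
  rintro _ hfix ⟨z, rfl⟩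
  simp only [mem_eqLocus, sub_apply, Module.End.one_apply] at hfix ⊢
  have hbound (n : ℕ) : n * ‖f z - z‖ ≤ 2 * ‖z‖ := by
    calc n * ‖f z - z‖ = ‖f^[n] z - z‖ := by
          rw [iterate_eq_add_smul_of_isFixedPt_sub hfix, add_sub_cancel_left, norm_smul,
            RCLike.norm_natCast]
      _ ≤ ‖f^[n] z‖ + ‖z‖ := norm_sub_le _ _
      _ ≤ 2 * ‖z‖ := by linarith [norm_iterate_le hf n z]
  by_contra hne
  obtain ⟨n, hn⟩ := exists_nat_gt (2 * ‖z‖ / ‖f z - z‖)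
  rw [div_lt_iff₀ (norm_pos_iff.mpr hne)] at hn
  linarith [hbound n]

theorem isCompl_eqLocus_range_sub_one [FiniteDimensional 𝕜 E] (hf : LipschitzWith 1 f) :
    IsCompl (eqLocus f 1) (range (f - 1)) := by
  refine (Submodule.isCompl_iff_disjoint _ _ ?_).mpr (disjoint_eqLocus_range_sub_one hf)
  rw [eqLocus_eq_ker_sub, add_comm, finrank_range_add_finrank_ker]

theorem tendsto_birkhoffAverage_projectionOnto [FiniteDimensional 𝕜 E] (hf : LipschitzWith 1 f)
    (x : E) :
    Tendsto (birkhoffAverage 𝕜 f _root_.id · x) atTop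
      (nhds (Submodule.projectionOnto _ _ (isCompl_eqLocus_range_sub_one hf) x)) := by
  set hc := isCompl_eqLocus_range_sub_one hf
  refine f.tendsto_birkhoffAverage_of_ker_subset_closure hf
    (Submodule.projectionOnto _ _ hc).toContinuousLinearMap
    (Submodule.projectionOnto_apply_left hc) (fun y hy => subset_closure ?_) x
  rwa [← Submodule.ker_projectionOnto hc]

end LinearMap

namespace Matrix

variable {n : Type*} [Fintype n] [DecidableEq n]

lemma norm_mulVec_le_of_mem_rowStochastic {P : Matrix n n ℝ} (hP : P ∈ rowStochastic ℝ n)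
    (x : n → ℝ) :
    ‖P *ᵥ x‖ ≤ ‖x‖ := by
  refine (pi_norm_le_iff_of_nonneg (norm_nonneg x)).mpr fun i => ?_
  calc ‖(P *ᵥ x) i‖ ≤ ∑ j, ‖P i j * x j‖ := norm_sum_le _ _
    _ ≤ ∑ j, P i j * ‖x‖ := by
        gcongr with j
        rw [norm_mul, Real.norm_of_nonneg (nonneg_of_mem_rowStochastic hP)]
        exact mul_le_mul_of_nonneg_left (norm_le_pi_norm x j) (nonneg_of_mem_rowStochastic hP)
    _ = ‖x‖ := by rw [← Finset.sum_mul, sum_row_of_mem_rowStochastic hP, one_mul]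

lemma lipschitzWith_one_toLin'_of_mem_rowStochastic {P : Matrix n n ℝ}
    (hP : P ∈ rowStochastic ℝ n) :
    LipschitzWith 1 (toLin' P) :=
  AddMonoidHomClass.lipschitz_of_bound_nnnorm (toLin' P) 1 fun x => by
    simpa [← NNReal.coe_le_coe] using norm_mulVec_le_of_mem_rowStochastic hP x

lemma birkhoffAverage_toLin'_col {R : Type*} [Semifield R] (P : Matrix n n R) (K : ℕ)
    (i j : n) :
    birkhoffAverage R (toLin' P) _root_.id K (P.col j) i =
      1 / (K : R) * ∑ k ∈ Finset.Icc 1 K, (P ^ k) i j := by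
  simp only [birkhoffAverage, birkhoffSum, Pi.smul_apply, smul_eq_mul, one_div, id_eq,
    Finset.sum_apply]
  rw [← Finset.Ico_add_one_right_eq_Icc, Finset.sum_Ico_eq_sum_range, Nat.add_sub_cancel]
  congr 1
  refine Finset.sum_congr rfl fun k _ => ?_
  rw [← mulVec_single_one, ← Module.End.coe_pow, ← toLin'_pow, toLin'_apply, mulVec_mulVec,
    ← pow_succ, mulVec_single_one, add_comm]
  rfl

end Matrix

theorem cesaro_limit_of_stochastic_matrix_general
    {S : Type*} [Fintype S] [DecidableEq S]
    (P : Matrix S S ℝ)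
    (hnonneg : ∀ i j : S, 0 ≤ P i j)
    (hrow : ∀ i : S, ∑ j : S, P i j = 1) :
    ∃ Q : Matrix S S ℝ, ∀ i j : S,
      Tendsto
        (fun K : ℕ => (1 / (K : ℝ)) * ∑ k ∈ Finset.Icc 1 K, (P ^ k) i j)
        atTop (nhds (Q i j)) := by
  have hP : P ∈ Matrix.rowStochastic ℝ S := Matrix.mem_rowStochastic_iff_sum.mpr ⟨hnonneg, hrow⟩
  have hf := Matrix.lipschitzWith_one_toLin'_of_mem_rowStochastic hP
  refine ⟨fun i j =>
    (Submodule.projectionOnto _ _ (LinearMap.isCompl_eqLocus_range_sub_one hf) (P.col j) :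
      S → ℝ) i, fun i j => ?_⟩
  have hcol := LinearMap.tendsto_birkhoffAverage_projectionOnto hf (P.col j)
  simpa only [Function.comp_def, Matrix.birkhoffAverage_toLin'_col] using
    ((continuous_apply i).tendsto _).comp hcol

/-- for a row-stochastic matrix `P` over a finite nonempty index
set (nonnegative entries, rows summing to `1`), the Cesàro averages
`(1/K) ∑_{k=1}^{K} P^k` converge entrywise as `K → ∞`. -/
theorem cesaro_limit_of_stochastic_matrix
    {S : Type*} [Fintype S] [Nonempty S] [DecidableEq S]
    (P : Matrix S S ℝ)
    (hnonneg : ∀ i j : S, 0 ≤ P i j)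
    (hrow : ∀ i : S, ∑ j : S, P i j = 1) :
    ∃ Q : Matrix S S ℝ, ∀ i j : S,
      Tendsto
        (fun K : ℕ => (1 / (K : ℝ)) * ∑ k ∈ Finset.Icc 1 K, (P ^ k) i j)
        atTop (nhds (Q i j)) :=
  cesaro_limit_of_stochastic_matrix_general P hnonneg hrow
end
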